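/- arXiv:2006.03667 — 4 statements merged into one kernel-verified Lean document; each statement's English description precedes it below -/
import Mathlib

section
/- If f : X → Y and g : Y → Z are maps of nonempty path-connected spaces, g is surjective, and f and g∘f both have the path-covering property, then g has the path-covering property. -/
open unitInterval Topology

/-- The space of paths in `X` starting at `x`, as a subspace of `C(I, X)`
with the compact-open topology. -/
abbrev PS (X : Type*) [TopologicalSpace X] (x : X) : Type _ := {f : C(I, X) // f 0 = x}

/-- The map on based path spaces induced by `p`. -/
def indMap {E X : Type*} [TopologicalSpace E] [TopologicalSpace X] (p : C(E, X)) (e : E) :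
    PS E e → PS X (p e) :=
  fun α => ⟨p.comp α.1, by simp [α.2]⟩

/-- `p` has the unique path-lifting property. -/
def UniquePathLifting {E X : Type*} [TopologicalSpace E] [TopologicalSpace X]
    (p : C(E, X)) : Prop :=
  ∀ e : E, Function.Injective (indMap p e)

/-- `p` has the path-covering property. -/
def PathCovering {E X : Type*} [TopologicalSpace E] [TopologicalSpace X]
    (p : C(E, X)) : Prop :=
  ∀ e : E, Function.Bijective (indMap p e)

/-- `p` has the continuous path-covering property. -/
def ContPathCovering {E X : Type*} [TopologicalSpace E] [TopologicalSpace X]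
    (p : C(E, X)) : Prop :=
  ∀ e : E, IsHomeomorph (indMap p e)

/-- A space is totally path-disconnected if every path in it is constant. -/
def TotallyPathDisconnected (Z : Type*) [TopologicalSpace Z] : Prop :=
  ∀ γ : C(I, Z), ∀ s t : I, γ s = γ t

/-- `p` has the homotopy lifting property with respect to `Z`. -/
def HLP {E X : Type*} [TopologicalSpace E] [TopologicalSpace X] (p : C(E, X))
    (Z : Type*) [TopologicalSpace Z] : Prop :=
  ∀ (f : C(Z, E)) (g : C(Z × I, X)), (∀ z, g (z, 0) = p (f z)) →
    ∃ G : C(Z × I, E), (∀ w, p (G w) = g w) ∧ ∀ z, G (z, 0) = f z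

theorem indMap_comp {X Y Z : Type*} [TopologicalSpace X] [TopologicalSpace Y]
    [TopologicalSpace Z] (f : C(X, Y)) (g : C(Y, Z)) (x : X) :
    indMap (g.comp f) x = indMap g (f x) ∘ indMap f x :=
  rfl

theorem PathCovering.surjective {E B : Type*} [TopologicalSpace E] [TopologicalSpace B]
    [Nonempty E] [PathConnectedSpace B] {p : C(E, B)} (hp : PathCovering p) :
    Function.Surjective p := by
  intro b
  obtain ⟨e₀⟩ := ‹Nonempty E›
  obtain ⟨γ⟩ := PathConnectedSpace.joined (p e₀) b
  obtain ⟨α, hα⟩ := (hp e₀).2 ⟨γ.toContinuousMap, γ.source⟩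
  refine ⟨α.1 1, ?_⟩
  simpa [indMap] using congrArg (fun β : PS B (p e₀) => β.1 1) hα

theorem PathCovering.of_comp {X Y Z : Type*} [TopologicalSpace X] [TopologicalSpace Y]
    [TopologicalSpace Z] {f : C(X, Y)} {g : C(Y, Z)} (hf : PathCovering f)
    (hfsurj : Function.Surjective f) (hgf : PathCovering (g.comp f)) :
    PathCovering g := by
  intro y
  obtain ⟨x, rfl⟩ := hfsurj y
  rw [← Function.Bijective.of_comp_iff _ (hf x), ← indMap_comp]
  exact hgf x

theorem stmt5_general {X Y Z : Type*} [TopologicalSpace X] [TopologicalSpace Y] [TopologicalSpace Z]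
    [PathConnectedSpace X] [PathConnectedSpace Y]
    (f : C(X, Y)) (g : C(Y, Z))
    (hf : PathCovering f) (hgf : PathCovering (g.comp f)) :
    PathCovering g :=
  hf.of_comp hf.surjective hgf

/-- If `g` is surjective and `f` and `g ∘ f` have the path-covering property,
then so does `g`. -/
theorem stmt5 {X Y Z : Type*} [TopologicalSpace X] [TopologicalSpace Y] [TopologicalSpace Z]
    [PathConnectedSpace X] [PathConnectedSpace Y] [PathConnectedSpace Z]
    (f : C(X, Y)) (g : C(Y, Z)) (hgsurj : Function.Surjective g)
    (hf : PathCovering f) (hgf : PathCovering (g.comp f)) :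
    PathCovering g :=
  stmt5_general f g hf hgf
end

section
/- If p : E → X has the continuous path-covering property, e ∈ E, and Z is a contractible path-connected space with basepoint z, then the map F : (E,e)^(Z,z) → (X,p(e))^(Z,z), F(f) = p∘f, on based mapping sets is a bijection. -/
open unitInterval Topology

/- Injectivity: two lifts agreeing at the basepoint agree along every path out of it, by unique
path lifting. Surjectivity: let `H` contract `Z` to a point `c`. Lifting `g ∘ H(z, ·)` backwards
from `e` gives a point `e'` over `g c`; lifting all the paths `g ∘ H(w, ·)` from `e'` and taking
endpoints gives a map `Z → E`, continuous because the inverse of `P(E,e') → P(X,p e')` is. Uniqueness of lifts shows that it sends `z` to `e`. -/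

section

variable {E X : Type*} [TopologicalSpace E] [TopologicalSpace X] {p : C(E, X)}

theorem ContPathCovering.pathCovering (hp : ContPathCovering p) : PathCovering p :=
  fun e => (hp e).bijective

theorem PathCovering.uniquePathLifting (hp : PathCovering p) : UniquePathLifting p :=
  fun e => (hp e).injective

theorem UniquePathLifting.eq_of_comp_eq (hp : UniquePathLifting p) {γ₁ γ₂ : C(I, E)}
    (h₀ : γ₁ 0 = γ₂ 0) (h : p.comp γ₁ = p.comp γ₂) : γ₁ = γ₂ :=
  congrArg Subtype.val <|
    hp (γ₁ 0) (a₁ := ⟨γ₁, rfl⟩) (a₂ := ⟨γ₂, h₀.symm⟩) (Subtype.ext h)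

theorem UniquePathLifting.eq_of_comp_eq_of_apply_eq {Z : Type*} [TopologicalSpace Z]
    [PathConnectedSpace Z] (hp : UniquePathLifting p) {f₁ f₂ : C(Z, E)} {z : Z}
    (hz : f₁ z = f₂ z) (h : p.comp f₁ = p.comp f₂) : f₁ = f₂ := by
  ext w
  let γ := (PathConnectedSpace.somePath z w).toContinuousMap
  have hγ : f₁.comp γ = f₂.comp γ :=
    hp.eq_of_comp_eq (by simpa [γ] using hz) (by rw [← p.comp_assoc, h, p.comp_assoc])
  simpa [γ] using DFunLike.congr_fun hγ 1

theorem PathCovering.exists_lift (hp : PathCovering p) (γ : C(I, X)) {e : E} (he : p e = γ 0) :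
    ∃ γ' : C(I, E), γ' 0 = e ∧ p.comp γ' = γ := by
  obtain ⟨γ', hγ'⟩ := (hp e).surjective ⟨γ, he.symm⟩
  exact ⟨γ'.1, γ'.2, congrArg Subtype.val hγ'⟩

theorem ContPathCovering.exists_lift_homotopy_of_const {Z : Type*} [TopologicalSpace Z]
    (hp : ContPathCovering p) (e : E) (Γ : C(Z × I, X)) (hΓ : ∀ w, Γ (w, 0) = p e) :
    ∃ Γ' : C(Z × I, E), p.comp Γ' = Γ ∧ ∀ w, Γ' (w, 0) = e := by
  let lift : Z → PS E e := fun w => (hp e).homeomorph.symm ⟨Γ.curry w, hΓ w⟩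
  have hlift : Continuous lift :=
    (hp e).homeomorph.symm.continuous.comp (Γ.curry.continuous.subtype_mk _)
  refine ⟨ContinuousMap.uncurry ⟨fun w => (lift w).1, continuous_subtype_val.comp hlift⟩,
    ?_, fun w => (lift w).2⟩
  ext ⟨w, t⟩
  have hw : indMap p e (lift w) = ⟨Γ.curry w, hΓ w⟩ := (hp e).homeomorph.apply_symm_apply _
  exact DFunLike.congr_fun (congrArg Subtype.val hw) t

theorem ContPathCovering.exists_lift_of_contractible {Z : Type*} [TopologicalSpace Z]
    [ContractibleSpace Z] (hp : ContPathCovering p) {e : E} {z : Z} (g : C(Z, X))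
    (hg : g z = p e) : ∃ f : C(Z, E), f z = e ∧ p.comp f = g := by
  obtain ⟨c, ⟨K⟩⟩ := id_nullhomotopic Z
  let H : C(Z × I, Z) := K.symm.toContinuousMap.comp ContinuousMap.prodSwap
  let θ : C(I, Z) := H.curry z
  let σI : C(I, I) := ⟨σ, continuous_symm⟩
  obtain ⟨α, hα₀, hα⟩ := hp.pathCovering.exists_lift (g.comp (θ.comp σI)) (e := e)
    (by simp [θ, H, σI, hg])
  have hpα : ∀ t, p (α t) = g (θ (σ t)) := fun t => DFunLike.congr_fun hα t
  obtain ⟨Γ, hΓ, hΓ₀⟩ := hp.exists_lift_homotopy_of_const (α 1) (g.comp H)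
    (fun w => by simp [hpα, θ, H])
  have hΓz : Γ.curry z = α.comp σI :=
    hp.pathCovering.uniquePathLifting.eq_of_comp_eq (by simp [hΓ₀, σI]) <| by
      ext t
      simpa [hpα, θ, σI] using DFunLike.congr_fun hΓ (z, t)
  refine ⟨⟨fun w => Γ (w, 1), by fun_prop⟩,
    by simpa [σI, hα₀] using DFunLike.congr_fun hΓz 1, ?_⟩
  ext w
  simpa [H] using DFunLike.congr_fun hΓ (w, 1)

end

/-- If `p` has the continuous path-covering property and `Z` is a contractible
path-connected based space, then composition with `p` is a bijection on based
mapping sets `(E,e)^(Z,z) → (X,p(e))^(Z,z)`. -/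
theorem stmt10 {E X Z : Type*} [TopologicalSpace E] [TopologicalSpace X]
    [TopologicalSpace Z] [ContractibleSpace Z]
    (p : C(E, X)) (hp : ContPathCovering p) (e : E) (z : Z) :
    Function.Bijective (fun f : {f : C(Z, E) // f z = e} =>
      (⟨p.comp f.1, by simp [f.2]⟩ : {g : C(Z, X) // g z = p e})) := by
  refine ⟨fun f₁ f₂ h => Subtype.ext ?_, fun g => ?_⟩
  · exact hp.pathCovering.uniquePathLifting.eq_of_comp_eq_of_apply_eq
      (f₁.2.trans f₂.2.symm) (congrArg Subtype.val h)
  · obtain ⟨f, hfz, hf⟩ := hp.exists_lift_of_contractible g.1 g.2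
    exact ⟨⟨f, hfz⟩, Subtype.ext hf⟩
end

section
/- Suppose p : (E,e₀) → (X,x₀) has the continuous path-covering property, {x₀} is closed in X, and H = p_#(π₁(E,e₀)). Then the function φ : π₁(X,x₀)/H → p⁻¹(x₀) sending the coset H[α] to the endpoint α̃(1) of the unique lift α̃ of α starting at e₀ is a well-defined continuous bijection, where π₁(X,x₀)/H carries the quotient topology inherited from the compact-open topology on Ω(X,x₀). -/
open unitInterval Topology

/-- The relation on the loop space `Ω(X, p e₀)` identifying loops `α, β` with
`[α·β⁻] ∈ p_#(π₁(E,e₀))`; the quotient is the coset space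
`π₁(X,x₀)/p_#(π₁(E,e₀))` with the quotient topology from `Ω(X,x₀)`. -/
def cosetRel {E X : Type*} [TopologicalSpace E] [TopologicalSpace X] (p : C(E, X))
    (e₀ : E) (α β : {f : C(I, X) // f 0 = p e₀ ∧ f 1 = p e₀}) : Prop :=
  ∃ γ : Path e₀ e₀, (γ.map p.continuous).Homotopic
    ((⟨α.1, α.2.1, α.2.2⟩ : Path (p e₀) (p e₀)).trans
      (⟨β.1, β.2.1, β.2.2⟩ : Path (p e₀) (p e₀)).symm)

/-!
Lifting identifies paths at `x₀` with paths at `e₀` homeomorphically, so the endpoint of the lift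
depends continuously on the loop. Along a homotopy rel endpoints this endpoint traces a path in `E`
with constant projection, and by uniqueness of lifts such a path is constant: lifts of homotopic
loops end at the same point. Since the lift of `(γ ∘ p)·β` is `γ·β̃`, the endpoint is constant on
cosets, and it is continuous on the quotient. Lifts of `α` and `β` with a common endpoint
concatenate to a loop at `e₀` over `α·β⁻¹`, which gives injectivity; surjectivity holds because
`E` is path connected.
-/

section PathLifting

variable {E X : Type*} [TopologicalSpace E] [TopologicalSpace X]

namespace Path

variable {x₀ x₁ x₂ : X} {e₀ e₁ e₂ : E}

def IsLift (f : E → X) (u : Path e₀ e₁) (γ : Path x₀ x₁) : Prop :=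
  ∀ t, f (u t) = γ t

theorem isLift_map {f : E → X} (hf : Continuous f) (u : Path e₀ e₁) : IsLift f u (u.map hf) :=
  fun _ => rfl

theorem IsLift.trans {f : E → X} {u : Path e₀ e₁} {v : Path e₁ e₂} {γ : Path x₀ x₁}
    {δ : Path x₁ x₂} (hu : IsLift f u γ) (hv : IsLift f v δ) :
    IsLift f (u.trans v) (γ.trans δ) := by
  intro t
  rw [trans_apply, trans_apply]
  split_ifs
  · exact hu _
  · exact hv _

theorem IsLift.symm {f : E → X} {u : Path e₀ e₁} {γ : Path x₀ x₁} (hu : IsLift f u γ) :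
    IsLift f u.symm γ.symm :=
  fun _ => hu _

theorem IsLift.cast {f : E → X} {u : Path e₀ e₁} {γ : Path x₀ x₁} (hu : IsLift f u γ)
    {e₀' e₁' : E} (h₀ : e₀' = e₀) (h₁ : e₁' = e₁) : IsLift f (u.cast h₀ h₁) γ :=
  hu

theorem IsLift.map_eq {f : E → X} (hf : Continuous f) {u : Path e₀ e₁} {γ : Path (f e₀) (f e₁)}
    (hu : IsLift f u γ) : u.map hf = γ :=
  Path.ext (funext hu)

theorem Homotopic.trans_of_homotopic_trans_symm {γ : Path x₀ x₂} {α : Path x₀ x₁}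
    {β : Path x₂ x₁} (h : γ.Homotopic (α.trans β.symm)) : (γ.trans β).Homotopic α :=
  ((((h.hcomp (Homotopic.refl β)).trans (Homotopic.trans_assoc α β.symm β)).trans
    ((Homotopic.refl α).hcomp (Homotopic.symm_trans β))).trans (Homotopic.trans_refl α))

end Path

theorem UniquePathLifting.eq_const_of_comp_eq_const {p : C(E, X)} (hp : UniquePathLifting p)
    (c : C(I, E)) (hc : ∀ s, p (c s) = p (c 0)) : c = ContinuousMap.const I (c 0) :=
  congrArg Subtype.val <| hp (c 0) (a₁ := ⟨c, rfl⟩) (a₂ := ⟨ContinuousMap.const I (c 0), rfl⟩) <|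
    Subtype.ext <| ContinuousMap.ext hc

namespace ContPathCovering

theorem uniquePathLifting {p : C(E, X)} (hp : ContPathCovering p) : UniquePathLifting p :=
  fun e => (hp e).injective

variable {p : C(E, X)} (hp : ContPathCovering p)

noncomputable def liftHomeomorph (e : E) : PS X (p e) ≃ₜ PS E e :=
  ((hp e).homeomorph (indMap p e)).symm

theorem indMap_liftHomeomorph {e : E} (γ : PS X (p e)) :
    indMap p e (hp.liftHomeomorph e γ) = γ :=
  ((hp e).homeomorph (indMap p e)).apply_symm_apply γ

theorem liftHomeomorph_eq_of_indMap_eq {e : E} {γ : PS X (p e)} {u : PS E e}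
    (h : indMap p e u = γ) : hp.liftHomeomorph e γ = u :=
  h ▸ ((hp e).homeomorph (indMap p e)).symm_apply_apply u

noncomputable def liftEnd {e : E} {y : X} (γ : Path (p e) y) : E :=
  (hp.liftHomeomorph e ⟨γ.toContinuousMap, γ.source⟩).1 1

noncomputable def liftPath {e : E} {y : X} (γ : Path (p e) y) : Path e (hp.liftEnd γ) :=
  ⟨(hp.liftHomeomorph e ⟨γ.toContinuousMap, γ.source⟩).1,
    (hp.liftHomeomorph e ⟨γ.toContinuousMap, γ.source⟩).2, rfl⟩

theorem isLift_liftPath {e : E} {y : X} (γ : Path (p e) y) : (hp.liftPath γ).IsLift p γ :=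
  ContinuousMap.congr_fun (congrArg Subtype.val (hp.indMap_liftHomeomorph _))

theorem p_liftEnd {e : E} {y : X} (γ : Path (p e) y) : p (hp.liftEnd γ) = y := by
  simpa using hp.isLift_liftPath γ 1

theorem liftEnd_eq_of_isLift {e e' : E} {y : X} {γ : Path (p e) y} (u : Path e e')
    (hu : u.IsLift p γ) : hp.liftEnd γ = e' := by
  have hlift : hp.liftHomeomorph e ⟨γ.toContinuousMap, γ.source⟩ = ⟨u.toContinuousMap, u.source⟩ :=
    hp.liftHomeomorph_eq_of_indMap_eq (Subtype.ext (ContinuousMap.ext hu))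
  simp [liftEnd, hlift]

theorem continuous_liftEnd {e : E} {y : X} : Continuous (hp.liftEnd : Path (p e) y → E) :=
  (continuous_eval_const 1).comp <| continuous_subtype_val.comp <|
    (hp.liftHomeomorph e).continuous.comp <| continuous_induced_dom.subtype_mk _

theorem liftEnd_eq_of_homotopic {e : E} {y : X} {γ₁ γ₂ : Path (p e) y}
    (h : γ₁.Homotopic γ₂) : hp.liftEnd γ₁ = hp.liftEnd γ₂ := by
  obtain ⟨H⟩ := h
  let c : C(I, E) := ⟨fun s => hp.liftEnd (H.eval s), hp.continuous_liftEnd.comp <|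
    Path.continuous_uncurry_iff.mp H.continuous⟩
  have hc : c = ContinuousMap.const I (c 0) :=
    hp.uniquePathLifting.eq_const_of_comp_eq_const c fun s => by simp [c, p_liftEnd]
  simpa [c, H.eval_zero, H.eval_one] using (ContinuousMap.congr_fun hc 1).symm

theorem liftEnd_eq_of_cosetRel {e₀ : E} {α β : {f : C(I, X) // f 0 = p e₀ ∧ f 1 = p e₀}}
    (h : cosetRel p e₀ α β) :
    hp.liftEnd (⟨α.1, α.2.1, α.2.2⟩ : Path (p e₀) (p e₀)) =
      hp.liftEnd (⟨β.1, β.2.1, β.2.2⟩ : Path (p e₀) (p e₀)) := by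
  obtain ⟨γ, hγ⟩ := h
  rw [← hp.liftEnd_eq_of_homotopic hγ.trans_of_homotopic_trans_symm]
  exact hp.liftEnd_eq_of_isLift _ ((Path.isLift_map p.continuous γ).trans (hp.isLift_liftPath _))

end ContPathCovering

end PathLifting

theorem stmt16_general {E X : Type*} [TopologicalSpace E] [TopologicalSpace X]
    [PathConnectedSpace E] (p : C(E, X))
    (hp : ContPathCovering p) (e₀ : E) :
    ∃ φ : Quot (cosetRel p e₀) → {e : E // p e = p e₀},
      Continuous φ ∧ Function.Bijective φ ∧
      ∀ (α : {f : C(I, X) // f 0 = p e₀ ∧ f 1 = p e₀}) (αt : PS E e₀),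
        indMap p e₀ αt = ⟨α.1, α.2.1⟩ → (φ (Quot.mk _ α) : E) = αt.1 1 := by
  let toPath (α : {f : C(I, X) // f 0 = p e₀ ∧ f 1 = p e₀}) : Path (p e₀) (p e₀) :=
    ⟨α.1, α.2.1, α.2.2⟩
  let φ : Quot (cosetRel p e₀) → {e : E // p e = p e₀} :=
    Quot.lift (fun α => ⟨hp.liftEnd (toPath α), hp.p_liftEnd _⟩)
      fun _ _ h => Subtype.ext (hp.liftEnd_eq_of_cosetRel h)
  refine ⟨φ, ?continuous, ⟨?injective, ?surjective⟩, ?formula⟩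
  case continuous =>
    exact continuous_quot_lift _ <| (hp.continuous_liftEnd.comp <|
      continuous_induced_rng.2 continuous_subtype_val).subtype_mk _
  case injective =>
    rintro ⟨α⟩ ⟨β⟩ h
    have hend : hp.liftEnd (toPath α) = hp.liftEnd (toPath β) := congrArg Subtype.val h
    let γ : Path e₀ e₀ :=
      (hp.liftPath (toPath α)).trans ((hp.liftPath (toPath β)).symm.cast hend rfl)
    have hγ : γ.map p.continuous = (toPath α).trans (toPath β).symm :=
      ((hp.isLift_liftPath _).trans ((hp.isLift_liftPath _).symm.cast hend rfl)).map_eq _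
    exact Quot.sound ⟨γ, hγ ▸ .refl _⟩
  case surjective =>
    rintro ⟨e, he⟩
    let q := PathConnectedSpace.somePath e₀ e
    exact ⟨Quot.mk _ ⟨p.comp q.toContinuousMap, by simp, by simp [he]⟩,
      Subtype.ext (hp.liftEnd_eq_of_isLift q fun _ => rfl)⟩
  case formula =>
    intro α αt hα
    exact hp.liftEnd_eq_of_isLift ⟨αt.1, αt.2, rfl⟩ fun t =>
      ContinuousMap.congr_fun (congrArg Subtype.val hα) t

/-- If `p : (E,e₀) → (X,x₀)` has the continuous path-covering property and
`{x₀}` is closed, then the map `φ : π₁(X,x₀)/H → p⁻¹(x₀)` (`H = p_#(π₁(E,e₀))`)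
sending `H[α]` to the endpoint of the unique lift of `α` at `e₀` is a
well-defined continuous bijection. -/
theorem stmt16 {E X : Type*} [TopologicalSpace E] [TopologicalSpace X]
    [PathConnectedSpace E] [PathConnectedSpace X] (p : C(E, X))
    (hp : ContPathCovering p) (e₀ : E) (hx : IsClosed ({p e₀} : Set X)) :
    ∃ φ : Quot (cosetRel p e₀) → {e : E // p e = p e₀},
      Continuous φ ∧ Function.Bijective φ ∧
      ∀ (α : {f : C(I, X) // f 0 = p e₀ ∧ f 1 = p e₀}) (αt : PS E e₀),
        indMap p e₀ αt = ⟨α.1, α.2.1⟩ → (φ (Quot.mk _ α) : E) = αt.1 1 :=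
  stmt16_general p hp e₀
end

section
/- Let (X,x₀) be a path-connected space and H ≤ π₁(X,x₀). Let X̃_H = P(X,x₀)/∼ be the quotient of the based path space, where α ∼ β iff α(1) = β(1) and [α·β⁻] ∈ H, and let p_H : X̃_H → X be the endpoint projection. Then the endpoint evaluation map ev₁ : P(X̃_H, x̃_H) → X̃_H (where x̃_H is the class of the constant path) is a quotient map, and the induced map P(p_H) : P(X̃_H, x̃_H) → P(X,x₀) is a topological retraction, i.e. admits a continuous section. -/
open unitInterval Topology

attribute [local instance] Path.Homotopic.setoid

/-- The homotopy class of a loop, as an element of the fundamental group. -/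
noncomputable def loopCls {X : Type u} [TopologicalSpace X] {x₀ : X} (γ : Path x₀ x₀) :
    FundamentalGroup X x₀ :=
  FundamentalGroup.fromPath (X := TopCat.of X) ⟦γ⟧

/-- The relation on `P(X,x₀)` defining `X̃_H`: `α ∼ β` iff `α(1) = β(1)` and
`[α·β⁻] ∈ H`. -/
def pathRel {X : Type u} [TopologicalSpace X] (x₀ : X)
    (H : Subgroup (FundamentalGroup X x₀)) (α β : PS X x₀) : Prop :=
  ∃ h : α.1 1 = β.1 1,
    loopCls ((⟨α.1, α.2, rfl⟩ : Path x₀ (α.1 1)).trans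
      ((⟨β.1, β.2, h.symm⟩ : Path x₀ (α.1 1)).symm)) ∈ H

/-- The space `X̃_H`, the quotient of `P(X,x₀)` by `pathRel`. -/
abbrev XH {X : Type u} [TopologicalSpace X] (x₀ : X)
    (H : Subgroup (FundamentalGroup X x₀)) : Type u :=
  Quot (pathRel x₀ H)

/-- The basepoint `x̃_H` of `X̃_H`: the class of the constant path. -/
def baseptH {X : Type u} [TopologicalSpace X] (x₀ : X)
    (H : Subgroup (FundamentalGroup X x₀)) : XH x₀ H :=
  Quot.mk _ ⟨ContinuousMap.const I x₀, rfl⟩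

/-- The endpoint projection `p_H : X̃_H → X`. -/
def pH {X : Type u} [TopologicalSpace X] (x₀ : X)
    (H : Subgroup (FundamentalGroup X x₀)) : C(XH x₀ H, X) where
  toFun := Quot.lift (fun α : PS X x₀ => α.1 1) (fun _ _ h => h.elim fun h' _ => h')
  continuous_toFun := continuous_quot_lift _
    ((ContinuousEvalConst.continuous_eval_const (1 : I)).comp continuous_subtype_val)

/-! A path `α` from `x₀` lifts to `X̃_H` as `s(α) : t ↦ q_H(α|[0,t])`, depending continuously
on `α`. It starts at `x̃_H`, lies over `α` (so `P(p_H) ∘ s = id`) and ends at `q_H(α)`, so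
`ev₁ ∘ s = q_H`; since `q_H` is a quotient map and `s` is continuous, so is `ev₁`. -/

namespace PS

variable {X Y : Type*} [TopologicalSpace X] [TopologicalSpace Y] {x : X}

def refl (x : X) : PS X x := ⟨ContinuousMap.const I x, rfl⟩

def trunc (α : PS X x) (t : I) : PS X x :=
  ⟨α.1.comp ⟨(t * ·), by fun_prop⟩, by simp [α.2]⟩

def truncMap : C(PS X x × I, PS X x) where
  toFun p := p.1.trunc p.2
  continuous_toFun := by
    refine Continuous.subtype_mk ?_ _
    let F : C((PS X x × I) × I, X) := ⟨fun p => p.1.1.1 (p.1.2 * p.2), by fun_prop⟩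
    exact F.curry.continuous

@[simp]
theorem truncMap_apply (p : PS X x × I) : truncMap p = p.1.trunc p.2 := rfl

@[simp]
theorem trunc_one (α : PS X x) : α.trunc 1 = α := by
  ext t
  simp [trunc]

@[simp]
theorem trunc_zero (α : PS X x) : α.trunc 0 = refl x := by
  ext t
  simp [trunc, refl, α.2]

@[simp]
theorem trunc_apply_one (α : PS X x) (t : I) : (α.trunc t).1 1 = α.1 t := by
  simp [trunc]

def liftAlong (q : C(PS X x, Y)) (α : PS X x) : PS Y (q (refl x)) :=
  ⟨(q.comp truncMap).curry α, by simp⟩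

theorem continuous_liftAlong (q : C(PS X x, Y)) : Continuous (liftAlong q) :=
  (q.comp truncMap).curry.continuous.subtype_mk _

@[simp]
theorem liftAlong_apply_one (q : C(PS X x, Y)) (α : PS X x) : (liftAlong q α).1 1 = q α := by
  simp [liftAlong]

theorem isQuotientMap_eval_one {q : C(PS X x, Y)} (hq : IsQuotientMap q) :
    IsQuotientMap fun β : PS Y (q (refl x)) => β.1 1 :=
  have hsection : (fun β : PS Y (q (refl x)) => β.1 1) ∘ liftAlong q = q :=
    funext (liftAlong_apply_one q)
  IsQuotientMap.of_comp (continuous_liftAlong q) (by fun_prop) (by rwa [hsection])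

theorem indMap_liftAlong {p : C(Y, X)} {q : C(PS X x, Y)} (hpq : ∀ α, p (q α) = α.1 1)
    (α : PS X x) : (indMap p (q (refl x)) (liftAlong q α)).1 = α.1 := by
  ext t
  simp [indMap, liftAlong, hpq]

end PS

theorem continuous_indMap {E X : Type*} [TopologicalSpace E] [TopologicalSpace X]
    (p : C(E, X)) (e : E) : Continuous (indMap p e) :=
  (p.continuous_postcomp.comp continuous_subtype_val).subtype_mk _

theorem stmt18_general {X : Type u} [TopologicalSpace X] (x₀ : X)
    (H : Subgroup (FundamentalGroup X x₀)) :
    IsQuotientMap (fun α : PS (XH x₀ H) (baseptH x₀ H) => α.1 1) ∧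
    Continuous (indMap (pH x₀ H) (baseptH x₀ H)) ∧
    ∃ s : PS X x₀ → PS (XH x₀ H) (baseptH x₀ H), Continuous s ∧
      ∀ α : PS X x₀, indMap (pH x₀ H) (baseptH x₀ H) (s α) = ⟨α.1, α.2⟩ := by
  let q : C(PS X x₀, XH x₀ H) := ⟨Quot.mk _, continuous_quot_mk⟩
  exact ⟨PS.isQuotientMap_eval_one (q := q) isQuotientMap_quot_mk, continuous_indMap _ _,
    PS.liftAlong q, PS.continuous_liftAlong q,
    fun α => Subtype.ext (PS.indMap_liftAlong (p := pH x₀ H) (fun _ => rfl) α)⟩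

/-- For any path-connected based space `(X,x₀)` and subgroup `H ≤ π₁(X,x₀)`:
the endpoint evaluation `ev₁ : P(X̃_H, x̃_H) → X̃_H` is a quotient map, and the
induced map `P(p_H) : P(X̃_H, x̃_H) → P(X,x₀)` is a topological retraction,
i.e. it is continuous and admits a continuous section. -/
theorem stmt18 {X : Type u} [TopologicalSpace X] [PathConnectedSpace X] (x₀ : X)
    (H : Subgroup (FundamentalGroup X x₀)) :
    IsQuotientMap (fun α : PS (XH x₀ H) (baseptH x₀ H) => α.1 1) ∧
    Continuous (indMap (pH x₀ H) (baseptH x₀ H)) ∧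
    ∃ s : PS X x₀ → PS (XH x₀ H) (baseptH x₀ H), Continuous s ∧
      ∀ α : PS X x₀, indMap (pH x₀ H) (baseptH x₀ H) (s α) = ⟨α.1, α.2⟩ :=
  stmt18_general x₀ H
end
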